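/- arXiv:2405.02553 — 2 statements merged into one kernel-verified Lean document; each statement's English description precedes it below -/
import Mathlib

section
/- Fix j ∈ N. Then conv(B_j^≥) = {(x_j, y₀, y) : x_j ∈ [0,1], (y₀,y) ∈ Y, and Under(j,S) holds for every S ⊆ N\{j}}. -/
/-!
For `(y₀, y) ∈ Y` the family `Under(j, S)` is equivalent to its tightest member,
`S = {t | y j < y t}`, which reads `x ≤ w (y j)` where `w m = u₀ m + ∑ t, u t * min (y t) m` is the
weight of the truncation `(m, min y m)` of `(y₀, y)` at level `m`. Every point of `B_j^≥` satisfies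
it, and each `Under(j, S)` is linear in the point, whence `⊆`. Conversely, for `0 < x < 1` the
intermediate value theorem gives a level `m ≤ y j` with `w m = x`: the truncation at `m`, rescaled
by `1 / x`, is a point of `B_j^≥` with `x_j = 1` (its `j`-th and `0`-th coordinates agree), and the
remainder, rescaled by `1 / (1 - x)`, is one with `x_j = 0`.
-/

open Finset

lemma add_mem_convexHull_of_inv_smul_mem {E : Type*} [AddCommGroup E] [Module ℝ E] {s : Set E}
    {x : ℝ} (h0 : 0 < x) (h1 : x < 1) {p q : E} (hp : x⁻¹ • p ∈ s) (hq : (1 - x)⁻¹ • q ∈ s) :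
    p + q ∈ convexHull ℝ s := by
  have := convex_convexHull ℝ s (subset_convexHull ℝ s hp) (subset_convexHull ℝ s hq) h0.le
    (sub_nonneg.2 h1.le) (by ring)
  rwa [smul_inv_smul₀ h0.ne', smul_inv_smul₀ (sub_pos.2 h1).ne'] at this

variable {ι : Type*}

def truncAt (y : ι → ℝ) (m : ℝ) : ℝ × (ι → ℝ) := (m, fun t => min (y t) m)

lemma truncAt_eq_of_le {y : ι → ℝ} {m : ℝ} (h : ∀ t, y t ≤ m) : truncAt y m = (m, y) :=
  Prod.ext rfl (funext fun t => min_eq_left (h t))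

lemma inv_mul_sub_sum_le_iff {u : ι → ℝ} {U : ℝ} (hU : 0 < U) (R : Finset ι) (y : ι → ℝ)
    (x z : ℝ) :
    U⁻¹ * x - ∑ t ∈ R, u t * U⁻¹ * y t ≤ z ↔ x ≤ U * z + ∑ t ∈ R, u t * y t := by
  have : ∑ t ∈ R, u t * U⁻¹ * y t = U⁻¹ * ∑ t ∈ R, u t * y t := by
    rw [mul_sum]; exact sum_congr rfl fun t _ => by ring
  rw [this, ← mul_sub, inv_mul_le_iff₀ hU, sub_le_iff_le_add]

variable [Fintype ι]

section
variable (u0 : ℝ) (u : ι → ℝ)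

def weight : ℝ × (ι → ℝ) →ₗ[ℝ] ℝ where
  toFun q := u0 * q.1 + ∑ t, u t * q.2 t
  map_add' q r := by
    simp only [Prod.fst_add, Prod.snd_add, Pi.add_apply, mul_add, sum_add_distrib]
    ring
  map_smul' c q := by
    simp only [Prod.smul_fst, Prod.smul_snd, Pi.smul_apply, smul_eq_mul, RingHom.id_apply,
      mul_add, mul_sum, mul_left_comm]

def sliceY : Set (ℝ × (ι → ℝ)) :=
  {q | weight u0 u q = 1 ∧ ∀ t, 0 ≤ q.2 t ∧ q.2 t ≤ q.1}

variable (j : ι)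

def Bge : Set (ℝ × ℝ × (ι → ℝ)) :=
  {p | (p.1 = 0 ∨ p.1 = 1) ∧ p.2 ∈ sliceY u0 u ∧ p.2.1 * p.1 ≤ p.2.2 j}

variable [DecidableEq ι]

def Under (S : Finset ι) (p : ℝ × ℝ × (ι → ℝ)) : Prop :=
  (u0 + ∑ t ∈ insert j S, u t)⁻¹ * p.1 -
      ∑ t ∈ univ \ insert j S, u t * (u0 + ∑ s ∈ insert j S, u s)⁻¹ * p.2.2 t
    ≤ p.2.2 j

def underPolytope : Set (ℝ × ℝ × (ι → ℝ)) :=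
  {p | (0 ≤ p.1 ∧ p.1 ≤ 1) ∧ p.2 ∈ sliceY u0 u ∧ ∀ S, j ∉ S → Under u0 u j S p}

end

section
variable {u0 : ℝ} {u : ι → ℝ}

lemma weight_truncAt_le (hu : ∀ t, 0 ≤ u t) [DecidableEq ι] (y : ι → ℝ) (m : ℝ)
    (A : Finset ι) :
    weight u0 u (truncAt y m) ≤ (u0 + ∑ t ∈ A, u t) * m + ∑ t ∈ univ \ A, u t * y t := by
  show u0 * m + ∑ t, u t * min (y t) m ≤ _
  rw [← sum_sdiff (subset_univ A), add_mul, sum_mul]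
  have hA : ∑ t ∈ A, u t * min (y t) m ≤ ∑ t ∈ A, u t * m :=
    sum_le_sum fun t _ => mul_le_mul_of_nonneg_left (min_le_right _ _) (hu t)
  have hAc : ∑ t ∈ univ \ A, u t * min (y t) m ≤ ∑ t ∈ univ \ A, u t * y t :=
    sum_le_sum fun t _ => mul_le_mul_of_nonneg_left (min_le_left _ _) (hu t)
  linarith

lemma weight_truncAt_eq [DecidableEq ι] {y : ι → ℝ} {m : ℝ} {A : Finset ι}
    (hA : ∀ t ∈ A, m ≤ y t) (hAc : ∀ t ∉ A, y t ≤ m) :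
    weight u0 u (truncAt y m) = (u0 + ∑ t ∈ A, u t) * m + ∑ t ∈ univ \ A, u t * y t := by
  show u0 * m + ∑ t, u t * min (y t) m = _
  rw [← sum_sdiff (subset_univ A), add_mul, sum_mul]
  have hA' : ∑ t ∈ A, u t * min (y t) m = ∑ t ∈ A, u t * m :=
    sum_congr rfl fun t ht => by rw [min_eq_right (hA t ht)]
  have hAc' : ∑ t ∈ univ \ A, u t * min (y t) m = ∑ t ∈ univ \ A, u t * y t :=
    sum_congr rfl fun t ht => by rw [min_eq_left (hAc t (mem_sdiff.1 ht).2)]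
  rw [hA', hAc']
  ring

lemma weight_truncAt_mono (hu0 : 0 ≤ u0) (hu : ∀ t, 0 ≤ u t) (y : ι → ℝ) :
    Monotone fun m => weight u0 u (truncAt y m) := by
  intro m m' h
  show u0 * m + ∑ t, u t * min (y t) m ≤ u0 * m' + ∑ t, u t * min (y t) m'
  gcongr with t
  exact hu t

lemma weight_truncAt_zero {y : ι → ℝ} (hy : ∀ t, 0 ≤ y t) : weight u0 u (truncAt y 0) = 0 := by
  show u0 * 0 + ∑ t, u t * min (y t) 0 = 0
  simp [min_eq_right (hy _)]

lemma continuous_weight_truncAt (y : ι → ℝ) : Continuous fun m => weight u0 u (truncAt y m) := by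
  show Continuous fun m => u0 * m + ∑ t, u t * min (y t) m
  fun_prop

lemma inv_smul_mem_sliceY {q : ℝ × (ι → ℝ)} (hq : ∀ t, 0 ≤ q.2 t ∧ q.2 t ≤ q.1)
    (hw : 0 < weight u0 u q) : (weight u0 u q)⁻¹ • q ∈ sliceY u0 u :=
  ⟨by rw [map_smul, smul_eq_mul, inv_mul_cancel₀ hw.ne'], fun t =>
    ⟨mul_nonneg (inv_nonneg.2 hw.le) (hq t).1,
      mul_le_mul_of_nonneg_left (hq t).2 (inv_nonneg.2 hw.le)⟩⟩

lemma forall_under_iff (hu0 : 0 < u0) (hu : ∀ t, 0 ≤ u t) [DecidableEq ι] (j : ι)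
    (p : ℝ × ℝ × (ι → ℝ)) :
    (∀ S, j ∉ S → Under u0 u j S p) ↔ p.1 ≤ weight u0 u (truncAt p.2.2 (p.2.2 j)) := by
  obtain ⟨x, y0, y⟩ := p
  have hU (S : Finset ι) : 0 < u0 + ∑ t ∈ insert j S, u t :=
    add_pos_of_pos_of_nonneg hu0 (sum_nonneg fun t _ => hu t)
  simp only [Under, inv_mul_sub_sum_le_iff (hU _)]
  constructor
  · intro h
    have hS : j ∉ univ.filter (y j < y ·) := by simp
    refine (h _ hS).trans_eq (weight_truncAt_eq (fun t ht => ?_) fun t ht => ?_).symm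
    · rcases mem_insert.1 ht with rfl | ht
      · exact le_rfl
      · exact (mem_filter.1 ht).2.le
    · simp only [mem_insert, mem_filter, mem_univ, true_and, not_or, not_lt] at ht
      exact ht.2
  · exact fun h S _ => h.trans (weight_truncAt_le hu y (y j) _)

lemma convex_sliceY : Convex ℝ (sliceY u0 u) := by
  rintro q ⟨hq, hqb⟩ r ⟨hr, hrb⟩ a b ha hb hab
  refine ⟨by rw [map_add, map_smul, map_smul, hq, hr, smul_eq_mul, smul_eq_mul]; linarith,
    fun t => ⟨?_, ?_⟩⟩
  · show 0 ≤ a * q.2 t + b * r.2 t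
    have := (hqb t).1; have := (hrb t).1; positivity
  · show a * q.2 t + b * r.2 t ≤ a * q.1 + b * r.1
    gcongr
    exacts [(hqb t).2, (hrb t).2]

lemma le_weight_truncAt_of_mem_Bge (hu0 : 0 ≤ u0) (hu : ∀ t, 0 ≤ u t) {j : ι}
    {p : ℝ × ℝ × (ι → ℝ)} (hp : p ∈ Bge u0 u j) :
    p.1 ≤ weight u0 u (truncAt p.2.2 (p.2.2 j)) := by
  obtain ⟨x, y0, y⟩ := p
  obtain ⟨rfl | rfl, ⟨hw, hy⟩, hyj⟩ := hp
  · calc (0 : ℝ) = weight u0 u (truncAt y 0) := (weight_truncAt_zero fun t => (hy t).1).symm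
      _ ≤ _ := weight_truncAt_mono hu0 hu y (hy j).1
  · calc (1 : ℝ) = weight u0 u (truncAt y y0) := by rw [truncAt_eq_of_le fun t => (hy t).2, hw]
      _ ≤ _ := weight_truncAt_mono hu0 hu y (by simpa using hyj)

lemma mem_convexHull_Bge (hu0 : 0 < u0) (hu : ∀ t, 0 ≤ u t) {j : ι} {p : ℝ × ℝ × (ι → ℝ)}
    (hx : 0 ≤ p.1 ∧ p.1 ≤ 1) (hy : p.2 ∈ sliceY u0 u)
    (hxj : p.1 ≤ weight u0 u (truncAt p.2.2 (p.2.2 j))) : p ∈ convexHull ℝ (Bge u0 u j) := by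
  classical
  obtain ⟨x, y0, y⟩ := p
  obtain ⟨hw, hyb⟩ := hy
  dsimp only at hx hxj hw hyb
  rcases hx.1.eq_or_lt with rfl | hx0
  · exact subset_convexHull ℝ _ ⟨Or.inl rfl, ⟨hw, hyb⟩, by simpa using (hyb j).1⟩
  rcases hx.2.eq_or_lt with rfl | hx1
  · have : u0 * y0 ≤ u0 * y j := by
      have := hxj.trans (weight_truncAt_le hu y (y j) ∅)
      simp only [sum_empty, add_zero, sdiff_empty] at this
      change u0 * y0 + ∑ t, u t * y t = 1 at hw
      linarith
    exact subset_convexHull ℝ _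
      ⟨Or.inr rfl, ⟨hw, hyb⟩, by simpa using le_of_mul_le_mul_left this hu0⟩
  obtain ⟨m, ⟨hm0, hmj⟩, hmx⟩ : ∃ m ∈ Set.Icc 0 (y j), weight u0 u (truncAt y m) = x :=
    intermediate_value_Icc (hyb j).1 (continuous_weight_truncAt y).continuousOn
      ⟨(weight_truncAt_zero fun t => (hyb t).1).symm ▸ hx0.le, hxj⟩
  have hsplit : ((x, y0, y) : ℝ × ℝ × (ι → ℝ)) =
      (x, truncAt y m) + (0, (y0, y) - truncAt y m) := by
    simp [truncAt]
  rw [hsplit]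
  refine add_mem_convexHull_of_inv_smul_mem hx0 hx1 ?_ ?_
  · rw [Prod.smul_mk, smul_eq_mul, inv_mul_cancel₀ hx0.ne']
    refine ⟨Or.inr rfl, hmx ▸ inv_smul_mem_sliceY
      (fun t => ⟨le_min (hyb t).1 hm0, min_le_right _ _⟩) (hmx ▸ hx0), ?_⟩
    show x⁻¹ * m * 1 ≤ x⁻¹ * min (y j) m
    rw [min_eq_right hmj, mul_one]
  · have hrest : weight u0 u ((y0, y) - truncAt y m) = 1 - x := by rw [map_sub, hmx, hw]
    have hbelow (t : ι) : 0 ≤ y t - min (y t) m := sub_nonneg.2 (min_le_left _ _)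
    rw [Prod.smul_mk, smul_zero]
    refine ⟨Or.inl rfl, hrest ▸ inv_smul_mem_sliceY (fun t => ⟨hbelow t, ?_⟩)
      (hrest ▸ sub_pos.2 hx1), ?_⟩
    · show y t - min (y t) m ≤ y0 - m
      rcases le_total (y t) m with h | h
      · rw [min_eq_left h]; linarith [(hyb j).2]
      · rw [min_eq_right h]; linarith [(hyb t).2]
    · rw [mul_zero]
      exact mul_nonneg (inv_nonneg.2 (sub_pos.2 hx1).le) (hbelow j)

variable [DecidableEq ι]

lemma convex_underPolytope (j : ι) : Convex ℝ (underPolytope u0 u j) := by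
  rintro p ⟨⟨hx0, hx1⟩, hy, hS⟩ q ⟨⟨hx0', hx1'⟩, hy', hS'⟩ a b ha hb hab
  refine ⟨⟨?_, ?_⟩, convex_sliceY hy hy' ha hb hab, fun S hj => ?_⟩
  · show 0 ≤ a * p.1 + b * q.1
    positivity
  · show a * p.1 + b * q.1 ≤ 1
    nlinarith
  · have h := hS S hj
    have h' := hS' S hj
    simp only [Under, Prod.fst_add, Prod.snd_add, Prod.smul_fst, Prod.smul_snd, Pi.add_apply,
      Pi.smul_apply, smul_eq_mul] at h h' ⊢
    simp only [mul_add, sum_add_distrib, mul_left_comm _ a, mul_left_comm _ b, ← mul_sum]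
    nlinarith

end

theorem stmt13_general (n : ℕ) (u0 : ℝ) (hu0 : 0 < u0)
    (u : Fin n → ℝ) (hu : ∀ t, 0 ≤ u t) (j : Fin n) :
    convexHull ℝ {p : ℝ × ℝ × (Fin n → ℝ) |
        (p.1 = 0 ∨ p.1 = 1) ∧
        (u0 * p.2.1 + ∑ t, u t * p.2.2 t = 1 ∧ ∀ t, 0 ≤ p.2.2 t ∧ p.2.2 t ≤ p.2.1) ∧
        p.2.1 * p.1 ≤ p.2.2 j} =
      {p : ℝ × ℝ × (Fin n → ℝ) |
        (0 ≤ p.1 ∧ p.1 ≤ 1) ∧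
        (u0 * p.2.1 + ∑ t, u t * p.2.2 t = 1 ∧ ∀ t, 0 ≤ p.2.2 t ∧ p.2.2 t ≤ p.2.1) ∧
        ∀ S : Finset (Fin n), j ∉ S →
          (u0 + ∑ t ∈ insert j S, u t)⁻¹ * p.1 -
              ∑ t ∈ Finset.univ \ insert j S, u t * (u0 + ∑ s ∈ insert j S, u s)⁻¹ * p.2.2 t
            ≤ p.2.2 j} := by
  show convexHull ℝ (Bge u0 u j) = underPolytope u0 u j
  refine subset_antisymm
    (convexHull_min (fun p hp => ⟨?_, hp.2.1, ?_⟩) (convex_underPolytope j))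
    fun p ⟨hx, hy, hunder⟩ =>
      mem_convexHull_Bge hu0 hu hx hy ((forall_under_iff hu0 hu j p).1 hunder)
  · rcases hp.1 with h | h <;> rw [h] <;> norm_num
  · exact (forall_under_iff hu0 hu j p).2 (le_weight_truncAt_of_mem_Bge hu0.le hu hp)

/-- The `Under(j,S)` inequalities describe `conv(B_j^≥)`. -/
theorem stmt13 (n : ℕ) (hn : 1 ≤ n) (u0 : ℝ) (hu0 : 0 < u0)
    (u : Fin n → ℝ) (hu : ∀ t, 0 ≤ u t) (j : Fin n) :
    convexHull ℝ {p : ℝ × ℝ × (Fin n → ℝ) |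
        (p.1 = 0 ∨ p.1 = 1) ∧
        (u0 * p.2.1 + ∑ t, u t * p.2.2 t = 1 ∧ ∀ t, 0 ≤ p.2.2 t ∧ p.2.2 t ≤ p.2.1) ∧
        p.2.1 * p.1 ≤ p.2.2 j} =
      {p : ℝ × ℝ × (Fin n → ℝ) |
        (0 ≤ p.1 ∧ p.1 ≤ 1) ∧
        (u0 * p.2.1 + ∑ t, u t * p.2.2 t = 1 ∧ ∀ t, 0 ≤ p.2.2 t ∧ p.2.2 t ≤ p.2.1) ∧
        ∀ S : Finset (Fin n), j ∉ S →
          (u0 + ∑ t ∈ insert j S, u t)⁻¹ * p.1 -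
              ∑ t ∈ Finset.univ \ insert j S, u t * (u0 + ∑ s ∈ insert j S, u s)⁻¹ * p.2.2 t
            ≤ p.2.2 j} :=
  stmt13_general n u0 hu0 u hu j
end

section
/- Let r ∈ ℝⁿ, let C ∈ ℝ^{k×n} and d ∈ ℝ^k, and let F := {x ∈ {0,1}ⁿ : C x ≤ d} be nonempty. Suppose A ∈ ℝ^{p×n}, B ∈ ℝ^{p×q} and b ∈ ℝ^p give an extended formulation of conv(F), i.e. conv(F) = {x ∈ ℝⁿ : ∃ z ∈ ℝ^q with A x + B z ≤ b}. Then max{ (Σ_{j∈N} r_j u_j x_j)/(u₀ + Σ_{j∈N} u_j x_j) : x ∈ F } = sup{ Σ_{j∈N} r_j u_j y_j : ∃ z ∈ ℝ^q with A y + B z ≤ b·y₀, y₀ ≥ 0, and u₀y₀ + Σ_{j∈N} u_j y_j = 1 }. -/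
/-!
By Charnes–Cooper, the feasible points of the linear program with `y₀ > 0` are exactly the
rescalings `y = y₀ x`, `y₀ = 1 / (u₀ + u·x)`, of the points `x` of the projected polyhedron
`conv F`, and the objective at such a point is the MNL revenue at `x`; the case `y₀ = 0` cannot
occur because `conv F` is bounded and so has no nonzero recession direction. Hence the linear
program maximizes the revenue function over `conv F`. The revenue is linear-fractional with
positive denominator, so its superlevel condition `g x ≥ M h x` defines a half-space, and the
supremum over `conv F` equals the maximum over the finite set `F`.
-/

open Set Bornology Matrix

section LinearFractional

variable {E : Type*} [AddCommGroup E] [Module ℝ E]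

theorem AffineMap.le_of_mem_convexHull {f g : E →ᵃ[ℝ] ℝ} {S : Set E}
    (hS : ∀ x ∈ S, f x ≤ g x) {x : E} (hx : x ∈ convexHull ℝ S) : f x ≤ g x := by
  have hconv : Convex ℝ {x | f x ≤ g x} := by
    simpa [Set.preimage, sub_nonpos] using (convex_Iic (0 : ℝ)).affine_preimage (f - g)
  exact convexHull_min hS hconv hx

theorem sSup_image_div_convexHull (g h : E →ᵃ[ℝ] ℝ) {S : Set E} (hne : S.Nonempty)
    (hbdd : BddAbove ((fun x => g x / h x) '' S)) (hpos : ∀ x ∈ convexHull ℝ S, 0 < h x) :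
    sSup ((fun x => g x / h x) '' convexHull ℝ S) = sSup ((fun x => g x / h x) '' S) := by
  set M := sSup ((fun x => g x / h x) '' S)
  have hle : ∀ x ∈ convexHull ℝ S, g x / h x ≤ M := by
    intro x hx
    rw [div_le_iff₀ (hpos x hx)]
    refine AffineMap.le_of_mem_convexHull (g := M • h) (fun y hy => ?_) hx
    rw [AffineMap.coe_smul, Pi.smul_apply, smul_eq_mul,
      ← div_le_iff₀ (hpos y (subset_convexHull ℝ S hy))]
    exact le_csSup hbdd (mem_image_of_mem _ hy)
  apply le_antisymm
  · exact csSup_le ((hne.mono (subset_convexHull ℝ S)).image _) (forall_mem_image.2 hle)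
  · exact csSup_le_csSup ⟨M, forall_mem_image.2 hle⟩ (hne.image _)
      (image_mono (subset_convexHull ℝ S))

end LinearFractional

theorem Bornology.IsBounded.eq_zero_of_add_smul_mem {E : Type*} [NormedAddCommGroup E]
    [NormedSpace ℝ E] {s : Set E} (hs : IsBounded s) {x y : E}
    (h : ∀ t : ℝ, 0 ≤ t → x + t • y ∈ s) : y = 0 := by
  obtain ⟨C, hC⟩ := isBounded_iff_forall_norm_le.1 hs
  have hx : ‖x‖ ≤ C := by simpa using hC _ (h 0 le_rfl)
  by_contra hy
  have hy : 0 < ‖y‖ := norm_pos_iff.2 hy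
  set t := (2 * C + 1) / ‖y‖
  have ht : 0 ≤ t := div_nonneg (by linarith [norm_nonneg x]) hy.le
  have : t * ‖y‖ ≤ 2 * C := calc
    t * ‖y‖ = ‖(x + t • y) - x‖ := by
      rw [add_sub_cancel_left, norm_smul, Real.norm_of_nonneg ht]
    _ ≤ ‖x + t • y‖ + ‖x‖ := norm_sub_le _ _
    _ ≤ 2 * C := by linarith [hC _ (h t ht)]
  rw [div_mul_cancel₀ _ hy.ne'] at this
  linarith

section ExtendedFormulation

variable {m ι κ : Type*} [Fintype ι] [Fintype κ]
  {A : Matrix m ι ℝ} {B : Matrix m κ ℝ} {b : m → ℝ}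

def projPolyhedron (A : Matrix m ι ℝ) (B : Matrix m κ ℝ) (b : m → ℝ) : Set (ι → ℝ) :=
  {x | ∃ z : κ → ℝ, ∀ i, A.mulVec x i + B.mulVec z i ≤ b i}

def IsHomogenizedSolution (A : Matrix m ι ℝ) (B : Matrix m κ ℝ) (b : m → ℝ)
    (y₀ : ℝ) (y : ι → ℝ) (z : κ → ℝ) : Prop :=
  ∀ i, A.mulVec y i + B.mulVec z i ≤ b i * y₀

theorem mem_projPolyhedron_iff {x : ι → ℝ} :
    x ∈ projPolyhedron A B b ↔ ∃ z, IsHomogenizedSolution A B b 1 x z := by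
  simp [projPolyhedron, IsHomogenizedSolution]

namespace IsHomogenizedSolution

variable {y₀ : ℝ} {y : ι → ℝ} {z : κ → ℝ}

theorem smul (h : IsHomogenizedSolution A B b y₀ y z) {t : ℝ} (ht : 0 ≤ t) :
    IsHomogenizedSolution A B b (t * y₀) (t • y) (t • z) := fun i => by
  simp only [mulVec_smul, Pi.smul_apply, smul_eq_mul]
  nlinarith [h i]

theorem add (h : IsHomogenizedSolution A B b y₀ y z) {y₀' : ℝ} {y' : ι → ℝ} {z' : κ → ℝ}
    (h' : IsHomogenizedSolution A B b y₀' y' z') :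
    IsHomogenizedSolution A B b (y₀ + y₀') (y + y') (z + z') := fun i => by
  simp only [mulVec_add, Pi.add_apply]
  linarith [h i, h' i]

theorem inv_smul_mem (h : IsHomogenizedSolution A B b y₀ y z) (hy₀ : 0 < y₀) :
    y₀⁻¹ • y ∈ projPolyhedron A B b :=
  mem_projPolyhedron_iff.2 ⟨y₀⁻¹ • z, by
    simpa [inv_mul_cancel₀ hy₀.ne'] using h.smul (inv_nonneg.2 hy₀.le)⟩

/-- A bounded projected polyhedron has no nonzero recession direction. -/
theorem eq_zero (h : IsHomogenizedSolution A B b 0 y z) (hP : IsBounded (projPolyhedron A B b))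
    {x : ι → ℝ} (hx : x ∈ projPolyhedron A B b) : y = 0 := by
  obtain ⟨w, hw⟩ := mem_projPolyhedron_iff.1 hx
  refine hP.eq_zero_of_add_smul_mem (x := x) fun t ht =>
    mem_projPolyhedron_iff.2 ⟨w + t • z, ?_⟩
  simpa using hw.add (h.smul ht)

end IsHomogenizedSolution

/-- The Charnes–Cooper transformation. -/
theorem setOf_isHomogenizedSolution_eq_image (hP : IsBounded (projPolyhedron A B b))
    (hne : (projPolyhedron A B b).Nonempty) (g ℓ : (ι → ℝ) →ₗ[ℝ] ℝ) (c : ℝ)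
    (hpos : ∀ x ∈ projPolyhedron A B b, 0 < c + ℓ x) :
    {v | ∃ y₀ y z,
        IsHomogenizedSolution A B b y₀ y z ∧ 0 ≤ y₀ ∧ c * y₀ + ℓ y = 1 ∧ v = g y} =
      (fun x => g x / (c + ℓ x)) '' projPolyhedron A B b := by
  ext v
  constructor
  · rintro ⟨y₀, y, z, hsol, hy₀, hnorm, rfl⟩
    obtain rfl | hy₀ := hy₀.eq_or_lt
    · obtain ⟨x, hx⟩ := hne
      obtain rfl := hsol.eq_zero hP hx
      simp at hnorm
    · refine ⟨y₀⁻¹ • y, hsol.inv_smul_mem hy₀, ?_⟩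
      show g (y₀⁻¹ • y) / (c + ℓ (y₀⁻¹ • y)) = g y
      have hden : c + ℓ (y₀⁻¹ • y) = y₀⁻¹ := by
        rw [map_smul, smul_eq_mul]
        field_simp
        linarith
      rw [hden, map_smul, smul_eq_mul, div_inv_eq_mul, mul_comm, mul_inv_cancel_left₀ hy₀.ne']
  · rintro ⟨x, hx, rfl⟩
    obtain ⟨z, hz⟩ := mem_projPolyhedron_iff.1 hx
    have hden := hpos x hx
    have hinv := inv_nonneg.2 hden.le
    refine ⟨(c + ℓ x)⁻¹, (c + ℓ x)⁻¹ • x, (c + ℓ x)⁻¹ • z, ?_, hinv, ?_, ?_⟩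
    · simpa using hz.smul hinv
    · rw [map_smul, smul_eq_mul, mul_comm c, ← mul_add, inv_mul_cancel₀ hden.ne']
    · rw [map_smul, smul_eq_mul]
      exact div_eq_inv_mul _ _

end ExtendedFormulation

theorem stmt17_general (n k p q : ℕ) (u0 : ℝ) (hu0 : 0 < u0)
    (u : Fin n → ℝ) (hu : ∀ j, 0 ≤ u j) (r : Fin n → ℝ)
    (C : Matrix (Fin k) (Fin n) ℝ) (d : Fin k → ℝ)
    (A : Matrix (Fin p) (Fin n) ℝ) (B : Matrix (Fin p) (Fin q) ℝ) (b : Fin p → ℝ)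
    (F : Set (Fin n → ℝ))
    (hFdef : F = {x : Fin n → ℝ |
      (∀ j, x j = 0 ∨ x j = 1) ∧ ∀ i, C.mulVec x i ≤ d i})
    (hFne : F.Nonempty)
    (hconv : convexHull ℝ F =
      {x : Fin n → ℝ | ∃ z : Fin q → ℝ, ∀ i, A.mulVec x i + B.mulVec z i ≤ b i}) :
    sSup {v : ℝ | ∃ x ∈ F,
        v = (∑ j, r j * u j * x j) / (u0 + ∑ j, u j * x j)} =
    sSup {v : ℝ | ∃ (y0 : ℝ) (y : Fin n → ℝ) (z : Fin q → ℝ),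
        (∀ i, A.mulVec y i + B.mulVec z i ≤ b i * y0) ∧ 0 ≤ y0 ∧
        u0 * y0 + ∑ j, u j * y j = 1 ∧ v = ∑ j, r j * u j * y j} := by
  change convexHull ℝ F = projPolyhedron A B b at hconv
  let g := dotProductBilin ℝ ℝ (fun j => r j * u j)
  let ℓ := dotProductBilin ℝ ℝ u
  let h : (Fin n → ℝ) →ᵃ[ℝ] ℝ := AffineMap.const ℝ _ u0 + ℓ.toAffineMap
  have hF01 : ∀ x ∈ F, ∀ j, x j = 0 ∨ x j = 1 := by
    rw [hFdef]
    exact fun x hx => hx.1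
  have hFfin : F.Finite :=
    (Set.Finite.pi fun _ => (Set.finite_singleton (1 : ℝ)).insert 0).subset
      fun x hx j _ => hF01 x hx j
  have hhull : convexHull ℝ F ⊆ Icc 0 1 := convexHull_min
    (fun x hx => ⟨fun j => by rcases hF01 x hx j with h0 | h1 <;> simp [*],
      fun j => by rcases hF01 x hx j with h0 | h1 <;> simp [*]⟩) (convex_Icc 0 1)
  have hpos : ∀ x ∈ convexHull ℝ F, 0 < h x := fun x hx => show 0 < u0 + ∑ j, u j * x j from
    add_pos_of_pos_of_nonneg hu0 (Finset.sum_nonneg fun j _ => mul_nonneg (hu j) ((hhull hx).1 j))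
  have hPbdd : IsBounded (projPolyhedron A B b) := hconv ▸ (Metric.isBounded_Icc 0 1).subset hhull
  have hPne : (projPolyhedron A B b).Nonempty := hconv ▸ hFne.mono (subset_convexHull ℝ F)
  calc _ = sSup ((fun x => g.toAffineMap x / h x) '' F) :=
        congrArg sSup (Set.ext fun v => exists_congr fun x => and_congr_right fun _ => eq_comm)
    _ = sSup ((fun x => g.toAffineMap x / h x) '' convexHull ℝ F) :=
        (sSup_image_div_convexHull _ _ hFne ((hFfin.image _).bddAbove) hpos).symm
    _ = _ := by
        rw [hconv] at hpos ⊢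
        exact congrArg sSup (setOf_isHomogenizedSolution_eq_image hPbdd hPne g ℓ u0 hpos).symm

/-- LP formulation for constrained assortment optimization under MNL from an extended
formulation of the convex hull of the feasible region. -/
theorem stmt17 (n k p q : ℕ) (hn : 1 ≤ n) (u0 : ℝ) (hu0 : 0 < u0)
    (u : Fin n → ℝ) (hu : ∀ j, 0 ≤ u j) (r : Fin n → ℝ)
    (C : Matrix (Fin k) (Fin n) ℝ) (d : Fin k → ℝ)
    (A : Matrix (Fin p) (Fin n) ℝ) (B : Matrix (Fin p) (Fin q) ℝ) (b : Fin p → ℝ)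
    (F : Set (Fin n → ℝ))
    (hFdef : F = {x : Fin n → ℝ |
      (∀ j, x j = 0 ∨ x j = 1) ∧ ∀ i, C.mulVec x i ≤ d i})
    (hFne : F.Nonempty)
    (hconv : convexHull ℝ F =
      {x : Fin n → ℝ | ∃ z : Fin q → ℝ, ∀ i, A.mulVec x i + B.mulVec z i ≤ b i}) :
    sSup {v : ℝ | ∃ x ∈ F,
        v = (∑ j, r j * u j * x j) / (u0 + ∑ j, u j * x j)} =
    sSup {v : ℝ | ∃ (y0 : ℝ) (y : Fin n → ℝ) (z : Fin q → ℝ),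
        (∀ i, A.mulVec y i + B.mulVec z i ≤ b i * y0) ∧ 0 ≤ y0 ∧
        u0 * y0 + ∑ j, u j * y j = 1 ∧ v = ∑ j, r j * u j * y j} :=
  stmt17_general n k p q u0 hu0 u hu r C d A B b F hFdef hFne hconv
end
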